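/- Let Γ be a set of pure z-filters on LMC(S). Then the following are equivalent: (b) given distinct 𝓛 and 𝓚 in Γ, there exists B ∈ 𝓚° such that for every A ∈ Z(LMC(S)), if S^LMC − int(cl ε(B)) ⊆ int(cl ε(A)) then A ∈ 𝓛; (b') for each p̃ ∈ S^LMC there is at most one 𝓛 ∈ Γ with 𝓛 ⊆ p̃. -/

import Mathlib

open Set Topology WeakDual BoundedContinuousFunction

noncomputable section

variable (S : Type*) [TopologicalSpace S] [T2Space S] [Semigroup S]

/-- Left translation `λ_s`, as a continuous map, given continuity of left translations. -/
def lamC (hl : ∀ s : S, Continuous (fun t => s * t)) (s : S) : C(S, S) :=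
  ⟨fun t => s * t, hl s⟩

/-- An m-admissible subalgebra of `CB(S) = S →ᵇ ℂ`. -/
structure MAdmissible (hl : ∀ s : S, Continuous (fun t => s * t)) : Type _ where
  carrier : StarSubalgebra ℂ (S →ᵇ ℂ)
  isClosed' : IsClosed (carrier : Set (S →ᵇ ℂ))
  leftInvariant : ∀ (s : S), ∀ f ∈ carrier, f.compContinuous (lamC S hl s) ∈ carrier
  mAdmissible : ∀ (μ : characterSpace ℂ carrier) (f : S →ᵇ ℂ) (hf : f ∈ carrier),
    ∃ g ∈ carrier, ∀ s : S,
      g s = μ ⟨f.compContinuous (lamC S hl s), leftInvariant s f hf⟩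

variable {hl : ∀ s : S, Continuous (fun t => s * t)}

/-- The spectrum `S^F` of an m-admissible subalgebra. -/
abbrev specF (F : MAdmissible S hl) : Type _ := characterSpace ℂ F.carrier

/-- Evaluation at a point, as an algebra homomorphism on `F`. -/
def evalHom (F : MAdmissible S hl) (s : S) : F.carrier →ₐ[ℂ] ℂ where
  toFun f := (f : S →ᵇ ℂ) s
  map_one' := rfl
  map_mul' _ _ := rfl
  map_zero' := rfl
  map_add' _ _ := rfl
  commutes' _ := rfl

/-- The evaluation map `ε : S → S^F`. -/
def epsF (F : MAdmissible S hl) (s : S) : specF S F :=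
  haveI : CompleteSpace F.carrier := IsClosed.completeSpace_coe (hs := F.isClosed')
  CharacterSpace.equivAlgHom.symm (evalHom S F s)

variable (F : MAdmissible S hl)

/-- `Z(F)`: the collection of zero sets of members of `F`. -/
def ZSet : Set (Set S) := {A | ∃ f ∈ F.carrier, A = {s : S | f s = 0}}

/-- z-filters on `F`. -/
def IsZFilter (𝒜 : Set (Set S)) : Prop :=
  𝒜 ⊆ ZSet S F ∧ ∅ ∉ 𝒜 ∧ Set.univ ∈ 𝒜 ∧
    (∀ A ∈ 𝒜, ∀ B ∈ 𝒜, A ∩ B ∈ 𝒜) ∧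
    ∀ A ∈ 𝒜, ∀ B ∈ ZSet S F, A ⊆ B → B ∈ 𝒜

/-- `FS`: the collection of z-ultrafilters on `F`. -/
def zUltra : Set (Set (Set S)) :=
  {p | IsZFilter S F p ∧ ∀ q, IsZFilter S F q → p ⊆ q → q = p}

/-- `cl ε(A)` in `S^F`. -/
def epsCl (A : Set S) : Set (specF S F) := closure (epsF S F '' A)

/-- `⋂_{A ∈ p} cl ε(A)`; for `p ∈ FS` this is the singleton of the corresponding point of `S^F`. -/
def core (p : Set (Set S)) : Set (specF S F) := ⋂ A ∈ p, epsCl S F A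

/-- `p̃ = ⋂ [p]`, the intersection of the equivalence class of `p`. -/
def tilde (p : Set (Set S)) : Set (Set S) :=
  ⋂₀ {q | q ∈ zUltra S F ∧ core S F q = core S F p}

/-- pure z-filters. -/
def IsPure (𝒜 : Set (Set S)) : Prop :=
  IsZFilter S F 𝒜 ∧ ∀ p ∈ zUltra S F, 𝒜 ⊆ p → 𝒜 ⊆ tilde S F p

/-- `bar(𝒜) = {p̃ : 𝒜 ⊆ p}`, viewed as a subset of `S^F` via the identification of
`p̃` with the point `μ` such that `⋂_{A ∈ p} cl ε(A) = {μ}`. -/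
def barSet (𝒜 : Set (Set S)) : Set (specF S F) :=
  {μ | ∃ p ∈ zUltra S F, 𝒜 ⊆ p ∧ core S F p = {μ}}

/-- `𝒜° = {A ∈ 𝒜 : bar(𝒜) ⊆ int cl ε(A)}`. -/
def circA (𝒜 : Set (Set S)) : Set (Set S) :=
  {A ∈ 𝒜 | barSet S F 𝒜 ⊆ interior (epsCl S F A)}

/-- `⋂ J`, the intersection of the z-filters `p̃` corresponding to points of `J ⊆ S^F`. -/
def interOf (J : Set (specF S F)) : Set (Set S) :=
  ⋂₀ {C | ∃ p ∈ zUltra S F, ∃ μ ∈ J, core S F p = {μ} ∧ C = tilde S F p}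

/-- `⋂ [p̃]_R` for a relation `r` on `S^F`. -/
def classInter (r : specF S F → specF S F → Prop) (μ : specF S F) : Set (Set S) :=
  interOf S F {ν | r μ ν}

/-- `Ω_ℬ(A) = {x ∈ S : λ_x⁻¹(A) ∈ ℬ}`. -/
def OmegaZ (ℬ : Set (Set S)) (A : Set S) : Set S := {x : S | (fun t => x * t) ⁻¹' A ∈ ℬ}

/-- `𝒜 + ℬ`. -/
def zsum (𝒜 ℬ : Set (Set S)) : Set (Set S) :=
  {A ∈ ZSet S F | ∀ F' ∈ ZSet S F, OmegaZ S ℬ A ⊆ F' → F' ∈ 𝒜}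

/-- `𝒜 ⊙ ℬ = ⋂ bar(𝒜 + ℬ)`. -/
def odot (𝒜 ℬ : Set (Set S)) : Set (Set S) :=
  interOf S F (barSet S F (zsum S F 𝒜 ℬ))

/-- topological choice functions for a set `Γ` of z-filters. -/
def IsTCF (Γ : Set (Set (Set S))) (f : Set (Set S) → Set S) : Prop :=
  ∀ L ∈ Γ, f L ∈ L ∧ barSet S F L ⊆ interior (epsCl S F (f L))

/-- `A* = {𝓛 ∈ Γ : bar(𝓛) ∩ cl ε(A) ≠ ∅}`. -/
def starSet (Γ : Set (Set (Set S))) (A : Set S) : Set Γ :=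
  {L : Γ | (barSet S F (L : Set (Set S)) ∩ epsCl S F A).Nonempty}

/-- `A_* = {𝓛 ∈ Γ : bar(𝓛) ⊆ cl ε(A)}`. -/
def lowStar (Γ : Set (Set (Set S))) (A : Set S) : Set Γ :=
  {L : Γ | barSet S F (L : Set (Set S)) ⊆ epsCl S F A}

/-- The `τ*` quotient topology on `Γ`. -/
def tauStar (Γ : Set (Set (Set S))) : TopologicalSpace Γ :=
  TopologicalSpace.generateFrom {U | ∃ A ∈ ZSet S F, U = (starSet S F Γ A)ᶜ}

/-- The `τ_*` quotient topology on `Γ`. -/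
def tauLow (Γ : Set (Set (Set S))) : TopologicalSpace Γ :=
  TopologicalSpace.generateFrom {U | ∃ A ∈ ZSet S F, U = (lowStar S F Γ A)ᶜ}

/-- `Γ` is a quotient of `S^F`: conditions (a) and (b) of Theorem 3.9. -/
def IsQuotientOf (Γ : Set (Set (Set S))) : Prop :=
  (∀ L ∈ Γ, IsPure S F L) ∧
  (∀ f : Set (Set S) → Set S, IsTCF S F Γ f →
    ∃ 𝓕 : Finset (Set (Set S)), ↑𝓕 ⊆ Γ ∧
      (Set.univ : Set (specF S F)) = ⋃ L ∈ 𝓕, interior (epsCl S F (f L))) ∧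
  (∀ L ∈ Γ, ∀ K ∈ Γ, L ≠ K →
    ∃ A ∈ circA S F L, ∃ B ∈ circA S F K, ∀ C ∈ Γ,
      (∀ H ∈ ZSet S F, (interior (epsCl S F A))ᶜ ⊆ interior (epsCl S F H) → H ∈ C) ∨
      (∀ T ∈ ZSet S F, (interior (epsCl S F B))ᶜ ⊆ interior (epsCl S F T) → T ∈ C))

/-- The defining property of the map `γ : S^F → Γ` sending `p̃` to the unique member of `Γ`
contained in `p̃`. -/
def IsGamma (Γ : Set (Set (Set S))) (γ : specF S F → Γ) : Prop :=
  ∀ (μ : specF S F) (p : Set (Set S)), p ∈ zUltra S F → core S F p = {μ} →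
    (γ μ : Set (Set S)) ⊆ tilde S F p

/-- The defining property of the multiplication of `S^F`: `(μν)(f) = μ(T_ν f)` where
`(T_ν f)(s) = ν(L_s f)`. -/
def IsSpecMul (mul : specF S F → specF S F → specF S F) : Prop :=
  ∀ (μ ν : specF S F) (f : S →ᵇ ℂ) (hf : f ∈ F.carrier) (g : S →ᵇ ℂ) (hg : g ∈ F.carrier),
    (∀ s : S, g s = ν ⟨f.compContinuous (lamC S hl s), F.leftInvariant s f hf⟩) →
    mul μ ν ⟨f, hf⟩ = μ ⟨g, hg⟩

/-- `LMC(S)`, as a subset of `CB(S)`. -/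
def LMCset (hl : ∀ s : S, Continuous (fun t => s * t)) : Set (S →ᵇ ℂ) :=
  {f | ∀ μ : characterSpace ℂ (S →ᵇ ℂ),
    Continuous fun s : S => μ (f.compContinuous (lamC S hl s))}

/-! `S^F` is compact Hausdorff and, by Gelfand duality, every continuous function on it comes
from `F`; so Urysohn functions produce zero sets `A` for which `int cl ε(A)` contains a given
closed set while `cl ε(A)` avoids another one. For a z-filter `𝓛`, `bar(𝓛) = ⋂_{B ∈ 𝓛} cl ε(B)`
is closed, and by compactness `bar(𝓛) ⊆ int cl ε(A)` forces `A ∈ 𝓛`.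

If (b) holds and `𝓛, 𝓚 ⊆ p̃` are distinct, take `B ∈ 𝓚°` from (b): a zero set `A` whose
`int cl ε(A)` contains the complement of `int cl ε(B)` but whose `cl ε(A)` misses `p̃ ∈ bar(𝓚)`
lies in `𝓛 ⊆ p` and yet not in `p`. Conversely, under (b') purity makes `bar(𝓛)` and `bar(𝓚)`
disjoint, and a zero set `B` separating `bar(𝓚)` from `bar(𝓛)` is the required member of `𝓚°`. -/

section Development

variable {S : Type*} [TopologicalSpace S] [Semigroup S] {hl : ∀ s : S, Continuous fun t => s * t}
  {F : MAdmissible S hl}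

-- With this instance `F.carrier` is a commutative C⋆-algebra, so Gelfand duality applies.
instance (F : MAdmissible S hl) : IsClosed (F.carrier : Set (S →ᵇ ℂ)) := F.isClosed'

lemma epsF_apply (s : S) (f : F.carrier) : epsF S F s f = (f : S →ᵇ ℂ) s := rfl

lemma continuous_eval_specF (g : F.carrier) : Continuous fun φ : specF S F => φ g :=
  (WeakDual.eval_continuous g).comp continuous_subtype_val

lemma exists_eval_eq (k : C(specF S F, ℂ)) : ∃ g : F.carrier, ∀ φ : specF S F, φ g = k φ := by
  obtain ⟨g, hg⟩ := (gelfandStarTransform F.carrier).surjective k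
  exact ⟨g, fun φ => by rw [← hg]; rfl⟩

lemma denseRange_epsF : DenseRange (epsF S F) := by
  by_contra h
  obtain ⟨μ, hμ⟩ := (ne_univ_iff_exists_notMem _).mp (mt dense_iff_closure_eq.mpr h)
  obtain ⟨f, hf0, hf1, -⟩ := exists_continuous_zero_one_of_isClosed isClosed_closure
    isClosed_singleton (disjoint_singleton_right.mpr hμ)
  obtain ⟨g, hg⟩ := exists_eval_eq (⟨fun φ => (f φ : ℂ), by fun_prop⟩ : C(specF S F, ℂ))
  have hg0 : g = 0 := Subtype.ext <| BoundedContinuousFunction.ext fun s => by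
    have hgs := hg (epsF S F s)
    rw [epsF_apply] at hgs
    simpa [hf0 (subset_closure (mem_range_self s))] using hgs
  simpa [hg0, hf1 rfl] using hg μ

lemma epsF_mem_epsCl {A : Set S} {s : S} (hs : s ∈ A) : epsF S F s ∈ epsCl S F A :=
  subset_closure (mem_image_of_mem _ hs)

lemma epsCl_mono {A B : Set S} (h : A ⊆ B) : epsCl S F A ⊆ epsCl S F B :=
  closure_mono (image_mono h)

lemma epsCl_univ : epsCl S F univ = univ := by
  rw [epsCl, image_univ, denseRange_epsF.closure_range]

lemma IsOpen.subset_epsCl {U : Set (specF S F)} (hU : IsOpen U) {A : Set S}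
    (h : epsF S F ⁻¹' U ⊆ A) : U ⊆ epsCl S F A :=
  (Dense.open_subset_closure_inter denseRange_epsF hU).trans <|
    closure_mono <| by rintro _ ⟨hx, s, rfl⟩; exact ⟨s, h hx, rfl⟩

lemma epsCl_subset_of_isClosed {A : Set S} {C : Set (specF S F)} (hC : IsClosed C)
    (h : A ⊆ epsF S F ⁻¹' C) : epsCl S F A ⊆ C :=
  closure_minimal (image_subset_iff.mpr h) hC

lemma mem_of_epsF_mem_epsCl {A : Set S} (hA : A ∈ ZSet S F) {s : S}
    (hs : epsF S F s ∈ epsCl S F A) : s ∈ A := by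
  obtain ⟨f, hf, rfl⟩ := hA
  exact epsCl_subset_of_isClosed (isClosed_eq (continuous_eval_specF ⟨f, hf⟩) continuous_const)
    (fun _ h => h) hs

lemma inter_nonempty_of_mem_epsCl {A B : Set S} (hA : A ∈ ZSet S F) {μ : specF S F}
    (hB : μ ∈ epsCl S F B) (hμA : μ ∈ interior (epsCl S F A)) : (B ∩ A).Nonempty := by
  obtain ⟨_, hU, b, hb, rfl⟩ := mem_closure_iff.mp hB _ isOpen_interior hμA
  exact ⟨b, hb, mem_of_epsF_mem_epsCl hA (interior_subset hU)⟩

lemma interior_inter_subset_interior_epsCl_inter {A B : Set S} (hA : A ∈ ZSet S F)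
    (hB : B ∈ ZSet S F) :
    interior (epsCl S F A) ∩ interior (epsCl S F B) ⊆ interior (epsCl S F (A ∩ B)) :=
  interior_maximal ((isOpen_interior.inter isOpen_interior).subset_epsCl fun _ hs =>
      ⟨mem_of_epsF_mem_epsCl hA (interior_subset hs.1),
        mem_of_epsF_mem_epsCl hB (interior_subset hs.2)⟩)
    (isOpen_interior.inter isOpen_interior)

lemma mem_ZSet_of_forall_mem_iff (k : C(specF S F, ℝ)) {A : Set S}
    (hA : ∀ s, s ∈ A ↔ k (epsF S F s) = 0) : A ∈ ZSet S F := by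
  obtain ⟨g, hg⟩ := exists_eval_eq (⟨fun φ => (k φ : ℂ), by fun_prop⟩ : C(specF S F, ℂ))
  refine ⟨g, g.2, ?_⟩
  ext s
  have hgs := hg (epsF S F s)
  rw [epsF_apply] at hgs
  rw [hA, mem_ofPred_eq, hgs]
  exact Complex.ofReal_eq_zero.symm

lemma univ_mem_ZSet : univ ∈ ZSet S F :=
  ⟨0, zero_mem _, by ext; simp⟩

lemma inter_mem_ZSet {A B : Set S} (hA : A ∈ ZSet S F) (hB : B ∈ ZSet S F) :
    A ∩ B ∈ ZSet S F := by
  obtain ⟨f, hf, rfl⟩ := hA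
  obtain ⟨g, hg, rfl⟩ := hB
  have hk : Continuous fun φ : specF S F => ‖φ ⟨f, hf⟩‖ + ‖φ ⟨g, hg⟩‖ :=
    (continuous_eval_specF _).norm.add (continuous_eval_specF _).norm
  refine mem_ZSet_of_forall_mem_iff ⟨_, hk⟩ fun s => ?_
  simp [epsF_apply, add_eq_zero_iff_of_nonneg]

lemma exists_mem_ZSet_separating {C D : Set (specF S F)} (hC : IsClosed C) (hD : IsClosed D)
    (hCD : Disjoint C D) :
    ∃ A ∈ ZSet S F, D ⊆ interior (epsCl S F A) ∧ Disjoint C (epsCl S F A) := by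
  obtain ⟨f, hf0, hf1, -⟩ := exists_continuous_zero_one_of_isClosed hC hD hCD
  have hA : {s | 1 / 2 ≤ f (epsF S F s)} ∈ ZSet S F := by
    have hk : Continuous fun φ : specF S F => max (1 / 2 - f φ) 0 :=
      (continuous_const.sub f.continuous).max continuous_const
    refine mem_ZSet_of_forall_mem_iff ⟨_, hk⟩ fun s => ?_
    simp
  have hU : IsOpen {φ : specF S F | 1 / 2 < f φ} := isOpen_lt continuous_const f.continuous
  have hUA : {φ : specF S F | 1 / 2 < f φ} ⊆ epsCl S F {s | 1 / 2 ≤ f (epsF S F s)} :=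
    hU.subset_epsCl fun _ hs => show (1 : ℝ) / 2 ≤ _ from le_of_lt hs
  refine ⟨_, hA, fun μ hμ => interior_maximal hUA hU ?_, ?_⟩
  · norm_num [hf1 hμ]
  · refine disjoint_of_subset_right
      (epsCl_subset_of_isClosed (isClosed_le continuous_const f.continuous) fun _ h => h) ?_
    exact disjoint_left.mpr fun μ hμ h => by norm_num [hf0 hμ] at h

lemma IsZFilter.univ_mem {p : Set (Set S)} (hp : IsZFilter S F p) : univ ∈ p := hp.2.2.1

lemma IsZFilter.inter_mem {p : Set (Set S)} (hp : IsZFilter S F p) {A B : Set S} (hA : A ∈ p)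
    (hB : B ∈ p) : A ∩ B ∈ p :=
  hp.2.2.2.1 A hA B hB

lemma IsZFilter.mem_of_subset {p : Set (Set S)} (hp : IsZFilter S F p) {A B : Set S}
    (hA : A ∈ p) (hB : B ∈ ZSet S F) (hAB : A ⊆ B) : B ∈ p :=
  hp.2.2.2.2 A hA B hB hAB

lemma IsZFilter.nonempty_of_mem {p : Set (Set S)} (hp : IsZFilter S F p) {A : Set S}
    (hA : A ∈ p) : A.Nonempty :=
  nonempty_iff_ne_empty.mpr fun h => hp.2.1 (h ▸ hA)

lemma isZFilter_sUnion {c : Set (Set (Set S))} (hc : ∀ q ∈ c, IsZFilter S F q)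
    (hchain : IsChain (· ⊆ ·) c) (hne : c.Nonempty) : IsZFilter S F (⋃₀ c) := by
  obtain ⟨q₀, hq₀⟩ := hne
  refine ⟨?_, ?_, ⟨q₀, hq₀, (hc q₀ hq₀).univ_mem⟩, ?_, ?_⟩
  · rintro A ⟨q, hq, hA⟩
    exact (hc q hq).1 hA
  · rintro ⟨q, hq, hA⟩
    exact (hc q hq).2.1 hA
  · rintro A ⟨qa, hqa, hA⟩ B ⟨qb, hqb, hB⟩
    rcases hchain.total hqa hqb with hab | hba
    · exact ⟨qb, hqb, (hc qb hqb).inter_mem (hab hA) hB⟩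
    · exact ⟨qa, hqa, (hc qa hqa).inter_mem hA (hba hB)⟩
  · rintro A ⟨q, hq, hA⟩ B hB hAB
    exact ⟨q, hq, (hc q hq).mem_of_subset hA hB hAB⟩

lemma exists_zUltra_superset {L : Set (Set S)} (hL : IsZFilter S F L) :
    ∃ p ∈ zUltra S F, L ⊆ p := by
  obtain ⟨p, hLp, hp⟩ := zorn_subset_nonempty {q | IsZFilter S F q}
    (fun c hc hchain hne => ⟨_, isZFilter_sUnion hc hchain hne, fun _ => subset_sUnion_of_mem⟩)
    L hL
  exact ⟨p, ⟨hp.prop, fun q hq hpq => (hp.eq_of_subset hq hpq).symm⟩, hLp⟩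

lemma exists_zUltra_of_inter_nonempty {L D : Set (Set S)} (hL : IsZFilter S F L)
    (hD_univ : univ ∈ D) (hD_inter : ∀ A ∈ D, ∀ B ∈ D, A ∩ B ∈ D)
    (h : ∀ B ∈ L, ∀ A ∈ D, (B ∩ A).Nonempty) :
    ∃ p ∈ zUltra S F, L ⊆ p ∧ ∀ A ∈ D, A ∈ ZSet S F → A ∈ p := by
  have hq : IsZFilter S F {C | C ∈ ZSet S F ∧ ∃ B ∈ L, ∃ A ∈ D, B ∩ A ⊆ C} := by
    refine ⟨fun C hC => hC.1, ?_, ⟨univ_mem_ZSet, univ, hL.univ_mem, univ, hD_univ,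
      subset_univ _⟩, ?_, ?_⟩
    · rintro ⟨-, B, hB, A, hA, hBA⟩
      exact (h B hB A hA).ne_empty (subset_empty_iff.mp hBA)
    · rintro C₁ ⟨hC₁, B₁, hB₁, A₁, hA₁, h₁⟩ C₂ ⟨hC₂, B₂, hB₂, A₂, hA₂, h₂⟩
      exact ⟨inter_mem_ZSet hC₁ hC₂, B₁ ∩ B₂, hL.inter_mem hB₁ hB₂, A₁ ∩ A₂,
        hD_inter A₁ hA₁ A₂ hA₂, fun x hx => ⟨h₁ ⟨hx.1.1, hx.2.1⟩, h₂ ⟨hx.1.2, hx.2.2⟩⟩⟩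
    · rintro C ⟨-, B, hB, A, hA, hBA⟩ C' hC' hCC'
      exact ⟨hC', B, hB, A, hA, hBA.trans hCC'⟩
  obtain ⟨p, hp, hqp⟩ := exists_zUltra_superset hq
  exact ⟨p, hp, fun B hB => hqp ⟨hL.1 hB, B, hB, univ, hD_univ, inter_subset_left⟩,
    fun A hA hAZ => hqp ⟨hAZ, univ, hL.univ_mem, A, hA, inter_subset_right⟩⟩

lemma mem_of_mem_zUltra_of_inter_nonempty {p : Set (Set S)} (hp : p ∈ zUltra S F) {A : Set S}
    (hA : A ∈ ZSet S F) (h : ∀ B ∈ p, (B ∩ A).Nonempty) : A ∈ p := by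
  obtain ⟨q, hq, hpq, hAq⟩ := exists_zUltra_of_inter_nonempty (D := {C | A ⊆ C}) hp.1
    (subset_univ A) (fun _ h₁ _ h₂ => subset_inter h₁ h₂)
    (fun B hB _ hC => (h B hB).mono (inter_subset_inter_right _ hC))
  exact hp.2 q hq.1 hpq ▸ hAq A (subset_refl A) hA

lemma mem_core {p : Set (Set S)} {μ : specF S F} :
    μ ∈ core S F p ↔ ∀ A ∈ p, μ ∈ epsCl S F A :=
  mem_iInter₂

lemma core_anti {p q : Set (Set S)} (h : p ⊆ q) : core S F q ⊆ core S F p :=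
  fun _ hμ => mem_core.mpr fun A hA => mem_core.mp hμ A (h hA)

lemma mem_of_mem_zUltra_of_mem_interior {p : Set (Set S)} (hp : p ∈ zUltra S F)
    {μ : specF S F} (hμ : μ ∈ core S F p) {A : Set S} (hA : A ∈ ZSet S F)
    (hμA : μ ∈ interior (epsCl S F A)) : A ∈ p :=
  mem_of_mem_zUltra_of_inter_nonempty hp hA fun B hB =>
    inter_nonempty_of_mem_epsCl hA (mem_core.mp hμ B hB) hμA

lemma mem_core_of_forall_mem_interior {p : Set (Set S)} (hp : p ∈ zUltra S F) {μ : specF S F}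
    (h : ∀ A ∈ ZSet S F, μ ∈ interior (epsCl S F A) → A ∈ p) : μ ∈ core S F p := by
  refine mem_core.mpr fun C hC => by_contra fun hμC => ?_
  obtain ⟨A, hA, hμA, hCA⟩ := exists_mem_ZSet_separating isClosed_closure isClosed_singleton
    (disjoint_singleton_right.mpr hμC)
  obtain ⟨s, hsC, hsA⟩ := hp.1.nonempty_of_mem (hp.1.inter_mem hC (h A hA (hμA rfl)))
  exact hCA.ne_of_mem (epsF_mem_epsCl hsC) (epsF_mem_epsCl hsA) rfl

lemma IsZFilter.exists_epsCl_subset {L : Set (Set S)} (hL : IsZFilter S F L)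
    {U : Set (specF S F)} (hU : IsOpen U) (h : core S F L ⊆ U) :
    ∃ B ∈ L, epsCl S F B ⊆ U := by
  have : Nonempty L := ⟨⟨univ, hL.univ_mem⟩⟩
  obtain ⟨⟨B, hB⟩, hBU⟩ := exists_subset_nhds_of_isCompact (V := fun B : L => epsCl S F B)
    (fun B C => ⟨⟨B ∩ C, hL.inter_mem B.2 C.2⟩, epsCl_mono inter_subset_left,
      epsCl_mono inter_subset_right⟩)
    (fun _ => isClosed_closure.isCompact)
    (fun μ hμ => hU.mem_nhds (h (mem_core.mpr fun B hB => mem_iInter.mp hμ ⟨B, hB⟩)))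
  exact ⟨B, hB, hBU⟩

lemma IsZFilter.core_nonempty {L : Set (Set S)} (hL : IsZFilter S F L) :
    (core S F L).Nonempty := by
  by_contra h
  obtain ⟨B, hB, hBempty⟩ :=
    hL.exists_epsCl_subset isOpen_empty (not_nonempty_iff_eq_empty.mp h).le
  obtain ⟨s, hs⟩ := hL.nonempty_of_mem hB
  exact hBempty (epsF_mem_epsCl hs)

lemma IsZFilter.mem_of_core_subset_interior {L : Set (Set S)} (hL : IsZFilter S F L)
    {A : Set S} (hA : A ∈ ZSet S F) (h : core S F L ⊆ interior (epsCl S F A)) : A ∈ L := by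
  obtain ⟨B, hB, hBA⟩ := hL.exists_epsCl_subset isOpen_interior h
  exact hL.mem_of_subset hB hA fun s hs =>
    mem_of_epsF_mem_epsCl hA (interior_subset (hBA (epsF_mem_epsCl hs)))

lemma core_subsingleton {p : Set (Set S)} (hp : p ∈ zUltra S F) :
    (core S F p).Subsingleton := by
  intro μ hμ ν hν
  by_contra hne
  obtain ⟨A, hA, hμA, hνA⟩ := exists_mem_ZSet_separating isClosed_singleton isClosed_singleton
    (disjoint_singleton.mpr (Ne.symm hne))
  have hAp := mem_of_mem_zUltra_of_mem_interior hp hμ hA (hμA rfl)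
  exact hνA.ne_of_mem rfl (mem_core.mp hν A hAp) rfl

lemma exists_core_eq_singleton {p : Set (Set S)} (hp : p ∈ zUltra S F) :
    ∃ μ, core S F p = {μ} :=
  hp.1.core_nonempty.imp fun _ hμ => (core_subsingleton hp).eq_singleton_of_mem hμ

lemma IsZFilter.barSet_eq_core {L : Set (Set S)} (hL : IsZFilter S F L) :
    barSet S F L = core S F L := by
  refine subset_antisymm ?_ fun μ hμ => ?_
  · rintro μ ⟨p, -, hLp, hpμ⟩
    exact core_anti hLp (hpμ.ge rfl)
  set D := {A | A ∈ ZSet S F ∧ μ ∈ interior (epsCl S F A)}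
  have hD_univ : univ ∈ D := ⟨univ_mem_ZSet, by simp [epsCl_univ]⟩
  have hD_inter : ∀ A ∈ D, ∀ B ∈ D, A ∩ B ∈ D := fun A hA B hB =>
    ⟨inter_mem_ZSet hA.1 hB.1, interior_inter_subset_interior_epsCl_inter hA.1 hB.1 ⟨hA.2, hB.2⟩⟩
  obtain ⟨p, hp, hLp, hDp⟩ := exists_zUltra_of_inter_nonempty hL hD_univ hD_inter
    fun B hB A hA => inter_nonempty_of_mem_epsCl hA.1 (mem_core.mp hμ B hB) hA.2
  have hμp := mem_core_of_forall_mem_interior hp fun A hA hμA => hDp A ⟨hA, hμA⟩ hA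
  exact ⟨p, hp, hLp, (core_subsingleton hp).eq_singleton_of_mem hμp⟩

lemma tilde_subset {p : Set (Set S)} (hp : p ∈ zUltra S F) : tilde S F p ⊆ p :=
  sInter_subset_of_mem ⟨hp, rfl⟩

lemma exists_notMem_of_subset_zUltra {p L K : Set (Set S)} (hp : p ∈ zUltra S F)
    (hLp : L ⊆ p) (hKp : K ⊆ p) {B : Set S} (hB : B ∈ circA S F K) :
    ∃ A ∈ ZSet S F, (interior (epsCl S F B))ᶜ ⊆ interior (epsCl S F A) ∧ A ∉ L := by
  obtain ⟨μ, hpμ⟩ := exists_core_eq_singleton hp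
  have hμB : μ ∈ interior (epsCl S F B) := hB.2 ⟨p, hp, hKp, hpμ⟩
  obtain ⟨A, hA, hBA, hμA⟩ := exists_mem_ZSet_separating isClosed_singleton
    isOpen_interior.isClosed_compl (disjoint_singleton_left.mpr (not_not_intro hμB))
  refine ⟨A, hA, hBA, fun hAL => ?_⟩
  exact hμA.ne_of_mem rfl (mem_core.mp (hpμ.ge rfl) A (hLp hAL)) rfl

lemma exists_mem_circA_of_disjoint_barSet {L K : Set (Set S)} (hL : IsZFilter S F L)
    (hK : IsZFilter S F K) (hLK : Disjoint (barSet S F L) (barSet S F K)) :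
    ∃ B ∈ circA S F K, ∀ A ∈ ZSet S F,
      (interior (epsCl S F B))ᶜ ⊆ interior (epsCl S F A) → A ∈ L := by
  rw [hL.barSet_eq_core, hK.barSet_eq_core] at hLK
  obtain ⟨B, hB, hKB, hLB⟩ := exists_mem_ZSet_separating (isClosed_biInter fun _ _ =>
    isClosed_closure) (isClosed_biInter fun _ _ => isClosed_closure) hLK
  refine ⟨B, ⟨hK.mem_of_core_subset_interior hB hKB, hK.barSet_eq_core ▸ hKB⟩,
    fun A hA hBA => hL.mem_of_core_subset_interior hA fun μ hμ => hBA fun hμB => ?_⟩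
  exact hLB.ne_of_mem hμ (interior_subset hμB) rfl

end Development

theorem statement1
    (Γ : Set (Set (Set S))) (hΓ : ∀ L ∈ Γ, IsPure S F L) :
    (∀ L ∈ Γ, ∀ K ∈ Γ, L ≠ K → ∃ B ∈ circA S F K,
        ∀ A ∈ ZSet S F, (interior (epsCl S F B))ᶜ ⊆ interior (epsCl S F A) → A ∈ L) ↔
      (∀ p ∈ zUltra S F, ∀ L ∈ Γ, ∀ K ∈ Γ,
        L ⊆ tilde S F p → K ⊆ tilde S F p → L = K) := by
  constructor
  · intro hb p hp L hL K hK hLp hKp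
    by_contra hLK
    obtain ⟨B, hB, hBL⟩ := hb L hL K hK hLK
    obtain ⟨A, hA, hBA, hAL⟩ := exists_notMem_of_subset_zUltra hp
      (hLp.trans (tilde_subset hp)) (hKp.trans (tilde_subset hp)) hB
    exact hAL (hBL A hA hBA)
  · intro hb' L hL K hK hLK
    refine exists_mem_circA_of_disjoint_barSet (hΓ L hL).1 (hΓ K hK).1 (disjoint_left.mpr ?_)
    rintro μ ⟨p, hp, hLp, hpμ⟩ ⟨q, hq, hKq, hqμ⟩
    have htilde : tilde S F q = tilde S F p := by rw [tilde, tilde, hpμ, hqμ]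
    exact hLK (hb' p hp L hL K hK ((hΓ L hL).2 p hp hLp) (htilde ▸ (hΓ K hK).2 q hq hKq))

end
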